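/- arXiv:2012.09623 — 8 statements merged into one kernel-verified Lean document; each statement's English description precedes it below -/
import Mathlib

section
/- Define for d ≥ 2 the sequence η_d by η_2 = 2^{−α}, η_3 = (1 + 2^α(2^α−1))^{−1}, and the recursion η_{d+1}^{−1} = η_{d−1}^{−1} + 2^α(η_d^{−1} − η_{d−1}^{−1}) with η_1 = 1. Then for all d ≥ 3, η_d = (1 + 2^α ∑_{k=1}^{(d−1)/2}(2^α−1)^{2(k−1)+1})^{−1} when d is odd, and η_d = (2^α ∑_{k=1}^{d/2}(2^α−1)^{2(k−1)})^{−1} when d is even. -/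
theorem stmt3 (α : ℝ) (hα : α ∈ Set.Ioo (0:ℝ) 1) (η : ℕ → ℝ)
    (h1 : η 1 = 1)
    (h2 : η 2 = (2:ℝ) ^ (-α))
    (h3 : η 3 = (1 + (2:ℝ) ^ α * ((2:ℝ) ^ α - 1))⁻¹)
    (hrec : ∀ d : ℕ, 2 ≤ d →
      (η (d + 1))⁻¹ = (η (d - 1))⁻¹ + (2:ℝ) ^ α * ((η d)⁻¹ - (η (d - 1))⁻¹)) :
    ∀ d : ℕ, 3 ≤ d →
      (Odd d → η d =
        (1 + (2:ℝ) ^ α * ∑ k ∈ Finset.range ((d - 1) / 2), ((2:ℝ) ^ α - 1) ^ (2 * k + 1))⁻¹) ∧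
      (Even d → η d =
        ((2:ℝ) ^ α * ∑ k ∈ Finset.range (d / 2), ((2:ℝ) ^ α - 1) ^ (2 * k))⁻¹) := by
  obtain ⟨hα0, hα1⟩ := hα
  set A : ℝ := (2:ℝ) ^ α with hA
  have hA1 : 1 < A := Real.one_lt_rpow_iff_of_pos (by norm_num) |>.2 (Or.inl ⟨by norm_num, hα0⟩)
  have hA2 : A < 2 := by
    calc A < (2:ℝ) ^ (1:ℝ) := Real.rpow_lt_rpow_of_exponent_lt (by norm_num) hα1
    _ = 2 := Real.rpow_one 2
  set r : ℝ := (A - 1) ^ 2 with hrdef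
  have hrne : r ≠ 1 := by intro h; rw [hrdef] at h; nlinarith
  have hrsub : r - 1 ≠ 0 := sub_ne_zero.mpr hrne
  have hrsub' : (A - 1) ^ 2 - 1 ≠ 0 := hrdef ▸ hrsub
  have hgeo : ∀ m : ℕ, ∑ k ∈ Finset.range m, r ^ k = (r ^ m - 1) / (r - 1) :=
    fun m => geom_sum_eq hrne m
  -- inverses of base values
  have h2' : (η 2)⁻¹ = A := by
    rw [h2, Real.rpow_neg (by norm_num)]; exact inv_inv _
  have h3' : (η 3)⁻¹ = 1 + A * (A - 1) := by rw [h3, inv_inv]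
  -- main two-step induction
  have key : ∀ m : ℕ, 1 ≤ m →
      (η (2 * m + 1))⁻¹ = 1 + A * (A - 1) * ∑ k ∈ Finset.range m, r ^ k ∧
      (η (2 * m + 2))⁻¹ = A * ∑ k ∈ Finset.range (m + 1), r ^ k := by
    intro m hm
    induction m with
    | zero => omega
    | succ n ih =>
      rcases Nat.lt_or_ge n 1 with hn | hn
      · -- n = 0, m = 1
        interval_cases n
        constructor
        · simpa using h3'
        · have h4 := hrec 3 (by norm_num)
          norm_num at h4
          rw [h3', h2'] at h4
          rw [show 2 * 1 + 2 = 4 by norm_num, h4]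
          simp [Finset.sum_range_succ, hrdef]
          ring
      · obtain ⟨ihl, ihr⟩ := ih hn
        have hodd : (η (2 * (n + 1) + 1))⁻¹ =
            1 + A * (A - 1) * ∑ k ∈ Finset.range (n + 1), r ^ k := by
          have h := hrec (2 * n + 2) (by omega)
          have e1 : 2 * n + 2 - 1 = 2 * n + 1 := by omega
          have e2 : 2 * n + 2 + 1 = 2 * (n + 1) + 1 := by ring
          rw [e1, e2, ihl, ihr] at h
          rw [h, hgeo n, hgeo (n + 1), pow_succ, hrdef]
          field_simp
          ring
        refine ⟨hodd, ?_⟩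
        have h := hrec (2 * (n + 1) + 1) (by omega)
        have e1 : 2 * (n + 1) + 1 - 1 = 2 * n + 2 := by omega
        have e2 : 2 * (n + 1) + 1 + 1 = 2 * (n + 1) + 2 := by ring
        have e15 : 2 * (n + 1) + 1 = 2 * (n + 1) + 1 := rfl
        rw [e1, e2, ihr, hodd] at h
        rw [h, hgeo (n + 1), hgeo (n + 1 + 1), pow_succ, hrdef]
        field_simp
        ring
  -- conclude
  intro d hd
  constructor
  · rintro ⟨m, rfl⟩
    have hm : 1 ≤ m := by omega
    have hk := (key m hm).1
    have hs : ∑ k ∈ Finset.range ((2 * m + 1 - 1) / 2), (A - 1) ^ (2 * k + 1)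
        = (A - 1) * ∑ k ∈ Finset.range m, r ^ k := by
      have : (2 * m + 1 - 1) / 2 = m := by omega
      rw [this, Finset.mul_sum]
      refine Finset.sum_congr rfl fun k _ => ?_
      rw [hrdef, ← pow_mul, pow_succ, mul_comm]
    rw [hs, ← mul_assoc, ← hk, inv_inv]
  · rintro ⟨m, hm2⟩
    have hm : 2 ≤ m := by omega
    obtain ⟨n, rfl⟩ : ∃ n, m = n + 1 := ⟨m - 1, by omega⟩
    have hk := (key n (by omega)).2
    have hd2 : d = 2 * n + 2 := by omega
    subst hd2
    have hs : ∑ k ∈ Finset.range ((2 * n + 2) / 2), (A - 1) ^ (2 * k)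
        = ∑ k ∈ Finset.range (n + 1), r ^ k := by
      have : (2 * n + 2) / 2 = n + 1 := by omega
      rw [this]
      refine Finset.sum_congr rfl fun k _ => ?_
      rw [hrdef, ← pow_mul, mul_comm]
    rw [hs, ← hk, inv_inv]
end

section
/- The sequence η_d defined by the closed-form expressions η_d = (1 + ((2^α−1)/(2−2^α))(1−(2^α−1)^{d−1}))^{−1} for odd d ≥ 3 and η_d = ((1/(2−2^α))(1−(2^α−1)^d))^{−1} for even d ≥ 2, with α ∈ (0,1), is strictly decreasing in d. -/
theorem stmt4 (α : ℝ) (hα : α ∈ Set.Ioo (0:ℝ) 1) (η : ℕ → ℝ)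
    (hodd : ∀ d : ℕ, 3 ≤ d → Odd d →
      η d = (1 + (((2:ℝ) ^ α - 1) / (2 - (2:ℝ) ^ α)) * (1 - ((2:ℝ) ^ α - 1) ^ (d - 1)))⁻¹)
    (heven : ∀ d : ℕ, 2 ≤ d → Even d →
      η d = ((1 / (2 - (2:ℝ) ^ α)) * (1 - ((2:ℝ) ^ α - 1) ^ d))⁻¹) :
    ∀ d : ℕ, 2 ≤ d → η (d + 1) < η d := by
  obtain ⟨hα0, hα1⟩ := hα
  set t : ℝ := (2:ℝ) ^ α - 1 with hts
  have h1 : (1:ℝ) < (2:ℝ) ^ α := by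
    have := Real.rpow_lt_rpow_of_exponent_lt (x := 2) one_lt_two hα0
    simpa using this
  have h2 : (2:ℝ) ^ α < 2 := by
    have := Real.rpow_lt_rpow_of_exponent_lt (x := 2) one_lt_two hα1
    simpa using this
  have ht0 : 0 < t := by simp [hts]; linarith
  have ht1 : t < 1 := by simp [hts]; linarith
  have h1t : (0:ℝ) < 1 - t := by linarith
  have hrw : (2:ℝ) - 2 ^ α = 1 - t := by rw [hts]; ring
  have hpow : ∀ d : ℕ, 1 ≤ d → t ^ d < 1 := fun d hd => pow_lt_one₀ ht0.le ht1 (by omega)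
  have hform : ∀ d : ℕ, 2 ≤ d → η d = (1 - t) / (1 - t ^ d) := by
    intro d hd
    have htd : (0:ℝ) < 1 - t ^ d := by have := hpow d (by omega); linarith
    rcases Nat.even_or_odd d with he | ho
    · rw [heven d hd he, hrw]
      rw [one_div, mul_comm, mul_inv, inv_inv, div_eq_mul_inv]
      ring
    · obtain ⟨k, hk⟩ := ho
      rw [hodd d (by omega) (⟨k, hk⟩ : Odd d), hrw]
      have hpw : t * t ^ (d - 1) = t ^ d := by
        rw [← pow_succ']
        congr 1
        omega
      have hkey : 1 + t / (1 - t) * (1 - t ^ (d - 1)) = (1 - t ^ d) / (1 - t) := by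
        field_simp
        nlinarith [hpw]
      rw [hkey, inv_div]
  intro d hd
  rw [hform d hd, hform (d + 1) (by omega)]
  apply div_lt_div_of_pos_left h1t
  · have := hpow d (by omega); linarith
  · have : t ^ (d + 1) < t ^ d := pow_lt_pow_right_of_lt_one₀ ht0 ht1 (lt_add_one d)
    linarith
end

section
/- For α, β, γ ∈ (0,1), the function h(v) = v + (((1+v^{1/α})^α − v)^{1/γ} + ((1+v^{1/β})^β − v)^{1/γ})^γ is strictly convex on (0,∞), i.e., h''(v) > 0 for all v > 0. -/
/-!
For positive `f`, `g` and `p = 1 / r`, put `S = f ^ p + g ^ p`. A Lagrange-identity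
rearrangement of the second derivative of `S ^ r` gives
`S ^ (r - 2) * ((p - 1) * (f * g) ^ (p - 2) * (f * g' - g * f') ^ 2`
`  + S * (f ^ (p - 1) * f'' + g ^ (p - 1) * g''))`.
For `0 < r < 1` the first summand is nonnegative. With `f = 1`, `g = v` it is positive, so each
gap `(1 + v ^ (1 / a)) ^ a - v` has positive second derivative; `h` is `v` plus the same
construction applied to two such gaps, and there the second summand is positive.
-/

open Real Set Filter Topology

theorem rpow_sub_two {x : ℝ} (hx : 0 < x) (y : ℝ) : x ^ (y - 2) = x ^ y / x ^ 2 := by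
  rw [rpow_sub hx, rpow_two]

section RpowSum

variable {r : ℝ} {f g : ℝ → ℝ} {s : Set ℝ}

theorem contDiffOn_rpowSum (hf : ContDiffOn ℝ 2 f s) (hg : ContDiffOn ℝ 2 g s)
    (hf₀ : ∀ x ∈ s, 0 < f x) (hg₀ : ∀ x ∈ s, 0 < g x) :
    ContDiffOn ℝ 2 (fun x => (f x ^ (1 / r) + g x ^ (1 / r)) ^ r) s :=
  ((hf.rpow_const_of_ne fun x hx => (hf₀ x hx).ne').add
    (hg.rpow_const_of_ne fun x hx => (hg₀ x hx).ne')).rpow_const_of_ne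
      fun x hx => (add_pos (rpow_pos_of_pos (hf₀ x hx) _) (rpow_pos_of_pos (hg₀ x hx) _)).ne'

theorem hasDerivAt_rpowSum (hr : r ≠ 0) {x : ℝ} (hf : DifferentiableAt ℝ f x)
    (hg : DifferentiableAt ℝ g x) (hfx : 0 < f x) (hgx : 0 < g x) :
    HasDerivAt (fun x => (f x ^ (1 / r) + g x ^ (1 / r)) ^ r)
      ((f x ^ (1 / r) + g x ^ (1 / r)) ^ (r - 1) *
        (f x ^ (1 / r - 1) * deriv f x + g x ^ (1 / r - 1) * deriv g x)) x := by
  have hS : 0 < f x ^ (1 / r) + g x ^ (1 / r) := by positivity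
  refine (((hf.hasDerivAt.rpow_const (Or.inl hfx.ne')).fun_add
    (hg.hasDerivAt.rpow_const (Or.inl hgx.ne'))).rpow_const (Or.inl hS.ne')).congr_deriv ?_
  field_simp

theorem deriv_deriv_rpowSum (hr : r ≠ 0) (hs : IsOpen s) (hf : ContDiffOn ℝ 2 f s)
    (hg : ContDiffOn ℝ 2 g s) (hf₀ : ∀ x ∈ s, 0 < f x) (hg₀ : ∀ x ∈ s, 0 < g x)
    {x : ℝ} (hx : x ∈ s) :
    deriv (deriv fun x => (f x ^ (1 / r) + g x ^ (1 / r)) ^ r) x =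
      (f x ^ (1 / r) + g x ^ (1 / r)) ^ (r - 2) *
        ((1 / r - 1) * (f x * g x) ^ (1 / r - 2) * (f x * deriv g x - g x * deriv f x) ^ 2 +
          (f x ^ (1 / r) + g x ^ (1 / r)) *
            (f x ^ (1 / r - 1) * deriv (deriv f) x + g x ^ (1 / r - 1) * deriv (deriv g) x)) := by
  have hdf := hf.differentiableOn two_ne_zero
  have hdg := hg.differentiableOn two_ne_zero
  have hdf' := (hf.deriv_of_isOpen hs (m := 1) le_rfl).differentiableOn one_ne_zero
  have hdg' := (hg.deriv_of_isOpen hs (m := 1) le_rfl).differentiableOn one_ne_zero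
  have hderiv : deriv (fun x => (f x ^ (1 / r) + g x ^ (1 / r)) ^ r) =ᶠ[𝓝 x]
      fun x => (f x ^ (1 / r) + g x ^ (1 / r)) ^ (r - 1) *
        (f x ^ (1 / r - 1) * deriv f x + g x ^ (1 / r - 1) * deriv g x) := by
    filter_upwards [hs.mem_nhds hx] with y hy
    exact (hasDerivAt_rpowSum hr ((hdf y hy).differentiableAt (hs.mem_nhds hy))
      ((hdg y hy).differentiableAt (hs.mem_nhds hy)) (hf₀ y hy) (hg₀ y hy)).deriv
  rw [hderiv.deriv_eq]
  have hfx := hf₀ x hx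
  have hgx := hg₀ x hx
  have hS : 0 < f x ^ (1 / r) + g x ^ (1 / r) := by positivity
  have hD {φ : ℝ → ℝ} (hφ : DifferentiableOn ℝ φ s) : HasDerivAt φ (deriv φ x) x :=
    ((hφ x hx).differentiableAt (hs.mem_nhds hx)).hasDerivAt
  have hpow {φ : ℝ → ℝ} (hφ : DifferentiableOn ℝ φ s) (hφx : 0 < φ x) (p : ℝ) :=
    (hD hφ).rpow_const (p := p) (Or.inl hφx.ne')
  refine ((((hpow hdf hfx _).fun_add (hpow hdg hgx _)).rpow_const (Or.inl hS.ne')).fun_mul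
    (((hpow hdf hfx _).fun_mul (hD hdf')).fun_add ((hpow hdg hgx _).fun_mul (hD hdg')))).deriv
    |>.trans ?_
  simp only [sub_sub, one_add_one_eq_two, mul_rpow hfx.le hgx.le, rpow_sub_one hfx.ne',
    rpow_sub_one hgx.ne', rpow_sub_one hS.ne', rpow_sub_two hfx, rpow_sub_two hgx, rpow_sub_two hS]
  field_simp
  ring

end RpowSum

theorem deriv_deriv_add_mul_id {F : ℝ → ℝ} {s : Set ℝ} (hs : IsOpen s)
    (hF : DifferentiableOn ℝ F s) (c : ℝ) {x : ℝ} (hx : x ∈ s) :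
    deriv (deriv fun y => F y + c * y) x = deriv (deriv F) x := by
  have hderiv : deriv (fun y => F y + c * y) =ᶠ[𝓝 x] fun y => deriv F y + c := by
    filter_upwards [hs.mem_nhds hx] with y hy
    rw [deriv_fun_add ((hF y hy).differentiableAt (hs.mem_nhds hy)) (by fun_prop)]
    simp
  rw [hderiv.deriv_eq, deriv_add_const]

noncomputable def logisticGap (a v : ℝ) : ℝ := (1 + v ^ (1 / a)) ^ a - v

variable {a : ℝ}

theorem logisticGap_pos (ha : a ∈ Ioo (0 : ℝ) 1) {v : ℝ} (hv : 0 < v) :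
    0 < logisticGap a v := by
  have hlt : (v ^ (1 / a)) ^ a < (1 + v ^ (1 / a)) ^ a := by
    gcongr
    · exact ha.1
    · linarith
  rwa [← rpow_mul hv.le, one_div_mul_cancel ha.1.ne', rpow_one, ← sub_pos] at hlt

theorem contDiffOn_logisticGap : ContDiffOn ℝ 2 (logisticGap a) (Ioi 0) := by
  unfold logisticGap
  fun_prop (disch := intro x (hx : 0 < x); positivity)

theorem deriv_deriv_logisticGap_pos (ha : a ∈ Ioo (0 : ℝ) 1) {v : ℝ} (hv : 0 < v) :
    0 < deriv (deriv (logisticGap a)) v := by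
  have hfun : logisticGap a =
      fun v => ((fun _ => (1 : ℝ)) v ^ (1 / a) + id v ^ (1 / a)) ^ a + (-1) * v := by
    ext v; simp [logisticGap, sub_eq_add_neg]
  have hf : ContDiffOn ℝ 2 (fun _ : ℝ => (1 : ℝ)) (Ioi 0) := contDiffOn_const
  have hg : ContDiffOn ℝ 2 id (Ioi (0 : ℝ)) := contDiffOn_id
  have hN := contDiffOn_rpowSum (r := a) hf hg (fun _ _ => one_pos) fun _ h => h
  rw [hfun, deriv_deriv_add_mul_id isOpen_Ioi (hN.differentiableOn two_ne_zero) _ hv,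
    deriv_deriv_rpowSum ha.1.ne' isOpen_Ioi hf hg (fun _ _ => one_pos) (fun _ h => h) hv]
  have hp : 0 < a⁻¹ - 1 := sub_pos.2 ((one_lt_inv₀ ha.1).2 ha.2)
  simp only [one_div, one_rpow, id_eq, one_mul, deriv_id', mul_one, deriv_const', mul_zero,
    sub_zero, one_pow, add_zero]
  positivity

theorem stmt6 (α β γ : ℝ) (hα : α ∈ Set.Ioo (0:ℝ) 1) (hβ : β ∈ Set.Ioo (0:ℝ) 1)
    (hγ : γ ∈ Set.Ioo (0:ℝ) 1)
    (h : ℝ → ℝ)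
    (hh : ∀ v : ℝ, h v =
      v + (((1 + v ^ (1/α)) ^ α - v) ^ (1/γ) + ((1 + v ^ (1/β)) ^ β - v) ^ (1/γ)) ^ γ) :
    StrictConvexOn ℝ (Set.Ioi 0) h ∧ ∀ v : ℝ, 0 < v → 0 < deriv (deriv h) v := by
  have hfun : h = fun v =>
      (logisticGap α v ^ (1 / γ) + logisticGap β v ^ (1 / γ)) ^ γ + 1 * v := by
    ext v; rw [hh, logisticGap, logisticGap]; ring
  have hN := contDiffOn_rpowSum (r := γ) contDiffOn_logisticGap contDiffOn_logisticGap
    (fun _ => logisticGap_pos hα) (fun _ => logisticGap_pos hβ)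
  have hconvex : ∀ v : ℝ, 0 < v → 0 < deriv (deriv h) v := by
    intro v hv
    rw [hfun, deriv_deriv_add_mul_id isOpen_Ioi (hN.differentiableOn two_ne_zero) _ hv,
      deriv_deriv_rpowSum hγ.1.ne' isOpen_Ioi contDiffOn_logisticGap contDiffOn_logisticGap
        (fun _ => logisticGap_pos hα) (fun _ => logisticGap_pos hβ) hv]
    have hp : 0 ≤ 1 / γ - 1 := sub_nonneg.2 (one_le_one_div hγ.1 hγ.2.le)
    have hfα := logisticGap_pos hα hv
    have hfβ := logisticGap_pos hβ hv
    have hfα'' := deriv_deriv_logisticGap_pos hα hv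
    have hfβ'' := deriv_deriv_logisticGap_pos hβ hv
    positivity
  refine ⟨strictConvexOn_of_deriv2_pos (convex_Ioi 0) ?_ fun v hv => ?_, hconvex⟩
  · rw [hfun]
    exact (hN.add (contDiffOn_const.mul contDiffOn_id)).continuousOn
  · exact hconvex v (by simpa using hv)
end

section
/- For α, β, γ ∈ (0,1), the function h(v) = v + (((1+v^{1/α})^α − v)^{1/γ} + ((1+v^{1/β})^β − v)^{1/γ})^γ satisfies h'(0⁺) = 1 − 2^γ < 0 and h'(1) > 0; consequently h' has a unique zero in (0,1), and h is strictly increasing on [1,∞). -/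
/-!
Write `A_e(v) = (1 + v^{1/e})^e - v` (`logisticExcess e`), so that
`h(v) = v + (A_α(v)^{1/γ} + A_β(v)^{1/γ})^γ`. For `e ∈ (0, 1)` we have `A_e > 0` and
`A_e'' = (1/e - 1)(1 + v^{1/e})^{e-2} v^{1/e-2} > 0`. With `p = 1/γ ≥ 1`, the map
`(x, y) ↦ (x^p + y^p)^{1/p}` is monotone, homogeneous and subadditive (Minkowski) on the positive
quadrant, so `h` is strictly convex on `(0, ∞)` and `h'` is strictly increasing there.

As `v → 0⁺`, `A_e → 1` and `A_e' → -1`, so `h'(0⁺) = 1 - 2 · 2^{γ-1} = 1 - 2^γ`. At `v = 1`,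
`h'(1) = 1 + c_α (2^{α-1} - 1) + c_β (2^{β-1} - 1)`, where each weight
`c = (x^{1/γ} + y^{1/γ})^{γ-1} x^{1/γ-1}` is less than `1` and each `2^{e-1} - 1` lies in
`(-1/2, 0)`; hence `h'(1) > 0`. Darboux's theorem gives a zero of `h'` in `(0, 1)`, unique by
monotonicity, and `h' > 0` on `(1, ∞)`.
-/

open Real Set Filter Topology

lemma Lp_add_le_of_nonneg_pair {p : ℝ} (hp : 1 ≤ p) {a b c d : ℝ} (ha : 0 ≤ a) (hb : 0 ≤ b)
    (hc : 0 ≤ c) (hd : 0 ≤ d) :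
    ((a + c) ^ p + (b + d) ^ p) ^ (1/p) ≤ (a ^ p + b ^ p) ^ (1/p) + (c ^ p + d ^ p) ^ (1/p) := by
  simpa [Fin.sum_univ_two] using Real.Lp_add_le_of_nonneg (s := Finset.univ) (f := ![a, b])
    (g := ![c, d]) hp (by simp [Fin.forall_fin_two, ha, hb]) (by simp [Fin.forall_fin_two, hc, hd])

lemma mul_rpow_add_mul_rpow_rpow_one_div {p : ℝ} (hp : 0 < p) {t a b : ℝ} (ht : 0 ≤ t)
    (ha : 0 ≤ a) (hb : 0 ≤ b) :
    ((t * a) ^ p + (t * b) ^ p) ^ (1/p) = t * (a ^ p + b ^ p) ^ (1/p) := by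
  rw [mul_rpow ht ha, mul_rpow ht hb, ← mul_add, mul_rpow (by positivity) (by positivity),
    ← rpow_mul ht, mul_one_div_cancel hp.ne', rpow_one]

lemma StrictConvexOn.rpow_add_rpow_rpow_one_div {E : Type*} [AddCommGroup E] [Module ℝ E]
    {s : Set E} {p : ℝ} (hp : 1 ≤ p) {f g : E → ℝ} (hf : StrictConvexOn ℝ s f)
    (hg : StrictConvexOn ℝ s g) (hf₀ : ∀ x ∈ s, 0 ≤ f x) (hg₀ : ∀ x ∈ s, 0 ≤ g x) :
    StrictConvexOn ℝ s (fun x => (f x ^ p + g x ^ p) ^ (1/p)) := by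
  have hp₀ : 0 < p := one_pos.trans_le hp
  refine ⟨hf.1, fun x hx y hy hxy a b ha hb hab => ?_⟩
  have hm : a • x + b • y ∈ s := hf.1 hx hy ha.le hb.le hab
  have hfm := hf.2 hx hy hxy ha hb hab
  have hgm := hg.2 hx hy hxy ha hb hab
  simp only [smul_eq_mul] at hfm hgm ⊢
  calc (f (a • x + b • y) ^ p + g (a • x + b • y) ^ p) ^ (1/p)
      < ((a * f x + b * f y) ^ p + (a * g x + b * g y) ^ p) ^ (1/p) := by
        refine rpow_lt_rpow (by have := hf₀ _ hm; have := hg₀ _ hm; positivity) ?_ (by positivity)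
        exact add_lt_add (rpow_lt_rpow (hf₀ _ hm) hfm hp₀) (rpow_lt_rpow (hg₀ _ hm) hgm hp₀)
    _ ≤ ((a * f x) ^ p + (a * g x) ^ p) ^ (1/p) + ((b * f y) ^ p + (b * g y) ^ p) ^ (1/p) := by
        have := hf₀ x hx; have := hf₀ y hy; have := hg₀ x hx; have := hg₀ y hy
        exact Lp_add_le_of_nonneg_pair hp (by positivity) (by positivity) (by positivity)
          (by positivity)
    _ = a * (f x ^ p + g x ^ p) ^ (1/p) + b * (f y ^ p + g y ^ p) ^ (1/p) := by
        rw [mul_rpow_add_mul_rpow_rpow_one_div hp₀ ha.le (hf₀ x hx) (hg₀ x hx),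
          mul_rpow_add_mul_rpow_rpow_one_div hp₀ hb.le (hf₀ y hy) (hg₀ y hy)]

lemma StrictConvexOn.existsUnique_deriv_eq_zero {S : Set ℝ} {f : ℝ → ℝ} {a b L : ℝ}
    (hfc : StrictConvexOn ℝ S f) (hfd : ∀ x ∈ S, DifferentiableAt ℝ f x) (hab : a < b)
    (hS : Ioc a b ⊆ S) (hlim : Tendsto (deriv f) (𝓝[>] a) (𝓝 L)) (hL : L < 0)
    (hb : 0 < deriv f b) :
    ∃! x, x ∈ Ioo a b ∧ deriv f x = 0 := by
  obtain ⟨c, hc_neg, hc⟩ : ∃ c, deriv f c < 0 ∧ c ∈ Ioo a b :=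
    ((hlim.eventually_lt_const hL).and (Ioo_mem_nhdsGT hab)).exists
  have hcb : Icc c b ⊆ S := fun x hx => hS ⟨hc.1.trans_le hx.1, hx.2⟩
  obtain ⟨x, hx, hx_zero⟩ : (0 : ℝ) ∈ deriv f '' Ioo c b :=
    exists_hasDerivWithinAt_eq_of_gt_of_lt hc.2.le
      (fun x hx => (hfd x (hcb hx)).hasDerivAt.hasDerivWithinAt) hc_neg hb
  refine ⟨x, ⟨⟨hc.1.trans hx.1, hx.2⟩, hx_zero⟩, fun y hy => ?_⟩
  exact (hfc.strictMonoOn_deriv hfd).injOn (hS (Ioo_subset_Ioc_self hy.1))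
    (hS (Ioo_subset_Ioc_self ⟨hc.1.trans hx.1, hx.2⟩)) (hy.2.trans hx_zero.symm)

lemma StrictConvexOn.strictMonoOn_Ici {S : Set ℝ} {f : ℝ → ℝ} {a : ℝ}
    (hfc : StrictConvexOn ℝ S f) (hfd : ∀ x ∈ S, DifferentiableAt ℝ f x) (hS : Ici a ⊆ S)
    (ha : 0 ≤ deriv f a) :
    StrictMonoOn f (Ici a) := by
  refine strictMonoOn_of_deriv_pos (convex_Ici a)
    (fun x hx => (hfd x (hS hx)).continuousAt.continuousWithinAt) fun x hx => ?_
  rw [interior_Ici] at hx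
  exact ha.trans_lt (hfc.strictMonoOn_deriv hfd (hS self_mem_Ici) (hS (mem_Ici.2 hx.le)) hx)

lemma tendsto_rpow_nhds_zero {c : ℝ} (hc : 0 < c) :
    Tendsto (fun v : ℝ => v ^ c) (𝓝 0) (𝓝 0) := by
  simpa [zero_rpow hc.ne'] using (continuousAt_rpow_const 0 c (Or.inr hc.le)).tendsto

lemma rpow_add_rpow_rpow_sub_one_mul_rpow_lt_one {γ x y : ℝ} (hγ : γ ∈ Ioo (0 : ℝ) 1)
    (hx : 0 < x) (hy : 0 < y) :
    (x ^ (1/γ) + y ^ (1/γ)) ^ (γ - 1) * x ^ (1/γ - 1) < 1 := by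
  have hlt : (x ^ (1/γ) + y ^ (1/γ)) ^ (γ - 1) < (x ^ (1/γ)) ^ (γ - 1) :=
    rpow_lt_rpow_of_neg (by positivity) (lt_add_of_pos_right _ (by positivity))
      (by linarith [hγ.2])
  calc (x ^ (1/γ) + y ^ (1/γ)) ^ (γ - 1) * x ^ (1/γ - 1)
      < (x ^ (1/γ)) ^ (γ - 1) * x ^ (1/γ - 1) := by gcongr
    _ = x ^ (1/γ * (γ - 1) + (1/γ - 1)) := by rw [← rpow_mul hx.le, rpow_add hx]
    _ = 1 := by
        rw [show 1/γ * (γ - 1) + (1/γ - 1) = 0 by field_simp [hγ.1.ne']; ring, rpow_zero]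

noncomputable def logisticExcess (e v : ℝ) : ℝ := (1 + v ^ (1/e)) ^ e - v

noncomputable def logisticExcessDeriv (e v : ℝ) : ℝ :=
  (1 + v ^ (1/e)) ^ (e - 1) * v ^ (1/e - 1) - 1

section logisticExcess

variable {e v : ℝ}

lemma logisticExcess_pos (he : 0 < e) (hv : 0 ≤ v) : 0 < logisticExcess e v := by
  have hroot : (v ^ (1/e)) ^ e = v := by
    rw [← rpow_mul hv, one_div_mul_cancel he.ne', rpow_one]
  have : (v ^ (1/e)) ^ e < (1 + v ^ (1/e)) ^ e :=
    rpow_lt_rpow (rpow_nonneg hv _) (lt_one_add _) he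
  rw [logisticExcess]
  linarith

lemma hasDerivAt_logisticExcess (he : e ≠ 0) (hv : 0 < v) :
    HasDerivAt (logisticExcess e) (logisticExcessDeriv e v) v := by
  have hbase : 0 < 1 + v ^ (1/e) := by positivity
  have hroot := (hasDerivAt_rpow_const (p := 1/e) (Or.inl hv.ne')).const_add 1
  have := ((hasDerivAt_rpow_const (p := e) (Or.inl hbase.ne')).comp v hroot).sub (hasDerivAt_id v)
  refine this.congr_deriv ?_
  rw [logisticExcessDeriv]
  field_simp

lemma hasDerivAt_logisticExcessDeriv (he : e ≠ 0) (hv : 0 < v) :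
    HasDerivAt (logisticExcessDeriv e)
      ((1/e - 1) * (1 + v ^ (1/e)) ^ (e - 2) * v ^ (1/e - 2)) v := by
  have hbase : 0 < 1 + v ^ (1/e) := by positivity
  have hroot := (hasDerivAt_rpow_const (p := 1/e) (Or.inl hv.ne')).const_add 1
  have := (((hasDerivAt_rpow_const (p := e - 1) (Or.inl hbase.ne')).comp v hroot).mul
    (hasDerivAt_rpow_const (p := 1/e - 1) (Or.inl hv.ne'))).sub_const 1
  refine this.congr_deriv ?_
  -- after factoring out `(1 + v^{1/e})^{e-2} v^{1/e-2}` the identity is polynomial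
  have hv' : v ^ (1/e - 1) * v ^ (1/e - 1) = v ^ (1/e - 2) * v ^ (1/e) := by
    rw [← rpow_add hv, ← rpow_add hv]; ring_nf
  have hbase' : (1 + v ^ (1/e)) ^ (e - 1) = (1 + v ^ (1/e)) ^ (e - 2) * (1 + v ^ (1/e)) := by
    rw [← rpow_add_one hbase.ne']; ring_nf
  simp only [Function.comp, show e - 1 - 1 = e - 2 by ring, show 1/e - 1 - 1 = 1/e - 2 by ring]
  linear_combination (e - 1) * (1/e) * (1 + v ^ (1/e)) ^ (e - 2) * hv'
    + (1/e - 1) * v ^ (1/e - 2) * hbase'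
    + (1 + v ^ (1/e)) ^ (e - 2) * v ^ (1/e - 2) * v ^ (1/e) * mul_inv_cancel₀ he

lemma strictConvexOn_logisticExcess (he : e ∈ Ioo (0 : ℝ) 1) :
    StrictConvexOn ℝ (Ioi 0) (logisticExcess e) := by
  refine strictConvexOn_of_deriv2_pos (convex_Ioi 0)
    (fun x hx => (hasDerivAt_logisticExcess he.1.ne' hx).continuousAt.continuousWithinAt)
    fun x hx => ?_
  rw [interior_Ioi] at hx
  have hderiv : deriv (logisticExcess e) =ᶠ[𝓝 x] logisticExcessDeriv e :=
    eventually_of_mem (Ioi_mem_nhds hx) fun y hy => (hasDerivAt_logisticExcess he.1.ne' hy).deriv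
  rw [Function.iterate_succ_apply, Function.iterate_one, hderiv.deriv_eq,
    (hasDerivAt_logisticExcessDeriv he.1.ne' hx).deriv]
  have : 0 < 1/e - 1 := sub_pos.2 (one_lt_one_div he.1 he.2)
  have hx : 0 < x := hx
  positivity

lemma tendsto_logisticExcess_zero (he : 0 < e) : Tendsto (logisticExcess e) (𝓝 0) (𝓝 1) := by
  unfold logisticExcess
  simpa using (((tendsto_rpow_nhds_zero (one_div_pos.2 he)).const_add 1).rpow_const
    (p := e) (Or.inl (by norm_num))).sub tendsto_id

lemma tendsto_logisticExcessDeriv_zero (he : e ∈ Ioo (0 : ℝ) 1) :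
    Tendsto (logisticExcessDeriv e) (𝓝 0) (𝓝 (-1)) := by
  unfold logisticExcessDeriv
  simpa using ((((tendsto_rpow_nhds_zero (one_div_pos.2 he.1)).const_add 1).rpow_const
    (p := e - 1) (Or.inl (by norm_num))).mul
      (tendsto_rpow_nhds_zero (sub_pos.2 (one_lt_one_div he.1 he.2)))).sub_const 1

lemma logisticExcessDeriv_one_mem_Ioo (he : e ∈ Ioo (0 : ℝ) 1) :
    logisticExcessDeriv e 1 ∈ Ioo (-1/2 : ℝ) 0 := by
  have hlow : (2 : ℝ) ^ (-1 : ℝ) < 2 ^ (e - 1) :=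
    rpow_lt_rpow_of_exponent_lt one_lt_two (by linarith [he.1])
  have hupp : (2 : ℝ) ^ (e - 1) < 1 := rpow_lt_one_of_one_lt_of_neg one_lt_two (by linarith [he.2])
  rw [rpow_neg_one] at hlow
  norm_num [logisticExcessDeriv]
  constructor <;> linarith

end logisticExcess

/-- The paper's `h(v) = g(1, v, 1)`, with `g` the gauge function of the trivariate vine. -/
noncomputable def vineGauge (α β γ v : ℝ) : ℝ :=
  v + (logisticExcess α v ^ (1/γ) + logisticExcess β v ^ (1/γ)) ^ γ

noncomputable def vineGaugeDeriv (α β γ v : ℝ) : ℝ :=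
  1 + (logisticExcess α v ^ (1/γ) + logisticExcess β v ^ (1/γ)) ^ (γ - 1) *
    (logisticExcess α v ^ (1/γ - 1) * logisticExcessDeriv α v +
      logisticExcess β v ^ (1/γ - 1) * logisticExcessDeriv β v)

section vineGauge

variable {α β γ : ℝ}

lemma hasDerivAt_vineGauge (hα : 0 < α) (hβ : 0 < β) (hγ : γ ≠ 0) {v : ℝ} (hv : 0 < v) :
    HasDerivAt (vineGauge α β γ) (vineGaugeDeriv α β γ v) v := by
  have hA := logisticExcess_pos hα hv.le
  have hB := logisticExcess_pos hβ hv.le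
  have hsum : HasDerivAt (fun y => logisticExcess α y ^ (1/γ) + logisticExcess β y ^ (1/γ)) _ v :=
    ((hasDerivAt_logisticExcess hα.ne' hv).rpow_const (Or.inl hA.ne')).add
      ((hasDerivAt_logisticExcess hβ.ne' hv).rpow_const (Or.inl hB.ne'))
  have := (hasDerivAt_id v).add (hsum.rpow_const (p := γ) (Or.inl (by positivity)))
  refine this.congr_deriv ?_
  rw [vineGaugeDeriv]
  field_simp

lemma strictConvexOn_vineGauge (hα : α ∈ Ioo (0 : ℝ) 1) (hβ : β ∈ Ioo (0 : ℝ) 1)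
    (hγ : γ ∈ Ioo (0 : ℝ) 1) :
    StrictConvexOn ℝ (Ioi 0) (vineGauge α β γ) := by
  have := (strictConvexOn_logisticExcess hα).rpow_add_rpow_rpow_one_div
    (one_lt_one_div hγ.1 hγ.2).le (strictConvexOn_logisticExcess hβ)
    (fun v hv => (logisticExcess_pos hα.1 (le_of_lt hv)).le)
    (fun v hv => (logisticExcess_pos hβ.1 (le_of_lt hv)).le)
  rw [one_div_one_div] at this
  exact (convexOn_id (convex_Ioi 0)).add_strictConvexOn this

lemma tendsto_vineGaugeDeriv_zero (hα : α ∈ Ioo (0 : ℝ) 1) (hβ : β ∈ Ioo (0 : ℝ) 1) :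
    Tendsto (vineGaugeDeriv α β γ) (𝓝 0) (𝓝 (1 - 2 ^ γ)) := by
  have hA := tendsto_logisticExcess_zero hα.1
  have hB := tendsto_logisticExcess_zero hβ.1
  have hsum := (hA.rpow_const (p := 1/γ) (Or.inl one_ne_zero)).add
    (hB.rpow_const (p := 1/γ) (Or.inl one_ne_zero))
  have := ((hsum.rpow_const (p := γ - 1) (Or.inl (by norm_num))).mul
    (((hA.rpow_const (p := 1/γ - 1) (Or.inl one_ne_zero)).mul
      (tendsto_logisticExcessDeriv_zero hα)).add
    ((hB.rpow_const (p := 1/γ - 1) (Or.inl one_ne_zero)).mul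
      (tendsto_logisticExcessDeriv_zero hβ)))).const_add 1
  have hlim : (1 : ℝ) + (1 ^ (1/γ) + 1 ^ (1/γ)) ^ (γ - 1) *
      (1 ^ (1/γ - 1) * -1 + 1 ^ (1/γ - 1) * -1) = 1 - 2 ^ γ := by
    rw [one_rpow, one_rpow, one_add_one_eq_two, rpow_sub_one two_ne_zero]
    ring
  rwa [hlim] at this

lemma vineGaugeDeriv_one_pos (hα : α ∈ Ioo (0 : ℝ) 1) (hβ : β ∈ Ioo (0 : ℝ) 1)
    (hγ : γ ∈ Ioo (0 : ℝ) 1) : 0 < vineGaugeDeriv α β γ 1 := by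
  have hA := logisticExcess_pos hα.1 zero_le_one
  have hB := logisticExcess_pos hβ.1 zero_le_one
  have hcA := rpow_add_rpow_rpow_sub_one_mul_rpow_lt_one hγ hA hB
  have hcB := rpow_add_rpow_rpow_sub_one_mul_rpow_lt_one hγ hB hA
  rw [add_comm] at hcB
  obtain ⟨hdA, hdA'⟩ := logisticExcessDeriv_one_mem_Ioo hα
  obtain ⟨hdB, hdB'⟩ := logisticExcessDeriv_one_mem_Ioo hβ
  have hA' := mul_neg_of_pos_of_neg (sub_pos.2 hcA) hdA'
  have hB' := mul_neg_of_pos_of_neg (sub_pos.2 hcB) hdB'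
  rw [vineGaugeDeriv]
  linarith

end vineGauge

theorem stmt7 (α β γ : ℝ) (hα : α ∈ Set.Ioo (0:ℝ) 1) (hβ : β ∈ Set.Ioo (0:ℝ) 1)
    (hγ : γ ∈ Set.Ioo (0:ℝ) 1)
    (h : ℝ → ℝ)
    (hh : ∀ v : ℝ, h v =
      v + (((1 + v ^ (1/α)) ^ α - v) ^ (1/γ) + ((1 + v ^ (1/β)) ^ β - v) ^ (1/γ)) ^ γ) :
    Filter.Tendsto (deriv h) (𝓝[>] (0:ℝ)) (𝓝 (1 - (2:ℝ) ^ γ)) ∧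
    1 - (2:ℝ) ^ γ < 0 ∧
    0 < deriv h 1 ∧
    (∃! v : ℝ, v ∈ Set.Ioo (0:ℝ) 1 ∧ deriv h v = 0) ∧
    StrictMonoOn h (Set.Ici 1) := by
  obtain rfl : h = vineGauge α β γ := funext hh
  have hderiv : ∀ v ∈ Ioi (0 : ℝ), HasDerivAt (vineGauge α β γ) (vineGaugeDeriv α β γ v) v :=
    fun v hv => hasDerivAt_vineGauge hα.1 hβ.1 hγ.1.ne' hv
  have hdiff : ∀ v ∈ Ioi (0 : ℝ), DifferentiableAt ℝ (vineGauge α β γ) v :=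
    fun v hv => (hderiv v hv).differentiableAt
  have hconv := strictConvexOn_vineGauge hα hβ hγ
  have hlim : Tendsto (deriv (vineGauge α β γ)) (𝓝[>] 0) (𝓝 (1 - 2 ^ γ)) :=
    ((tendsto_vineGaugeDeriv_zero hα hβ).mono_left nhdsWithin_le_nhds).congr'
      (eventually_nhdsWithin_of_forall fun v hv => (hderiv v hv).deriv.symm)
  have hneg : 1 - (2 : ℝ) ^ γ < 0 := sub_neg.2 (one_lt_rpow one_lt_two hγ.1)
  have hpos : 0 < deriv (vineGauge α β γ) 1 := by
    rw [(hderiv 1 (mem_Ioi.2 one_pos)).deriv]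
    exact vineGaugeDeriv_one_pos hα hβ hγ
  exact ⟨hlim, hneg, hpos,
    hconv.existsUnique_deriv_eq_zero hdiff one_pos Ioc_subset_Ioi_self hlim hneg hpos,
    hconv.strictMonoOn_Ici hdiff (Ici_subset_Ioi.2 one_pos) hpos.le⟩
end

section
/- For α, γ ∈ (0,1), setting v₀ = ((1−2^{−γ})^{−1/(1−α)} − 1)^{−α}, one has v₀ ∈ (0,1) and v₀ + 2^γ((1+v₀^{1/α})^α − v₀) equals (1 − 2^γ + 2^γ(1−2^{−γ})^{−α/(1−α)}) / ((1−2^{−γ})^{−1/(1−α)} − 1)^α. In particular, v₀ solves the critical point equation 1 + 2^γ((1+v^{−1/α})^{α−1} − 1) = 0. -/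
/-! Put `c = 1 - 2^{-γ} ∈ (0, 1/2)` and `t = c^{-1/(1-α)} > 2`, so that `v₀ = (t - 1)^{-α}`.
Then `v₀^{1/α} = (t - 1)⁻¹`, whence `(1 + v₀^{1/α})^α = t^α v₀`, which gives the closed form
of `h(v₀)`; and `1 + v₀^{-1/α} = t` with `t^{α-1} = c`, while `2^γ c = 2^γ - 1`, which is the
critical point equation. -/

open Real Set

lemma one_sub_two_rpow_neg_pos {γ : ℝ} (hγ : 0 < γ) : 0 < 1 - (2:ℝ) ^ (-γ) := by
  have : (2:ℝ) ^ (-γ) < 1 := rpow_lt_one_of_one_lt_of_neg one_lt_two (neg_neg_of_pos hγ)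
  linarith

lemma one_sub_two_rpow_neg_lt_half {γ : ℝ} (hγ : γ < 1) : 1 - (2:ℝ) ^ (-γ) < 1 / 2 := by
  have : (2:ℝ) ^ (-1:ℝ) < (2:ℝ) ^ (-γ) :=
    rpow_lt_rpow_of_exponent_lt one_lt_two (by linarith)
  rw [rpow_neg_one] at this
  linarith

lemma two_rpow_mul_one_sub_two_rpow_neg (γ : ℝ) :
    (2:ℝ) ^ γ * (1 - (2:ℝ) ^ (-γ)) = (2:ℝ) ^ γ - 1 := by
  rw [mul_sub, mul_one, ← rpow_add two_pos, add_neg_cancel, rpow_zero]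

lemma two_lt_rpow_of_lt_half {c p : ℝ} (hc0 : 0 < c) (hc : c < 1 / 2) (hp : p ≤ -1) :
    2 < c ^ p := by
  have h2c : 2 < c⁻¹ := by
    rw [lt_inv_comm₀ two_pos hc0]
    linarith
  calc 2 < c ^ (-1:ℝ) := by rwa [rpow_neg_one]
    _ ≤ c ^ p := rpow_le_rpow_of_exponent_ge hc0 (by linarith) hp

section

variable {α s : ℝ}

lemma rpow_neg_rpow_one_div (hs : 0 ≤ s) (hα : α ≠ 0) : (s ^ (-α)) ^ (1 / α) = s⁻¹ := by
  rw [← rpow_mul hs, show -α * (1 / α) = -1 by field_simp, rpow_neg_one]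

lemma rpow_neg_rpow_neg_one_div (hs : 0 ≤ s) (hα : α ≠ 0) : (s ^ (-α)) ^ (-1 / α) = s := by
  rw [← rpow_mul hs, show -α * (-1 / α) = 1 by field_simp, rpow_one]

lemma rpow_neg_one_div_one_sub_rpow_sub_one (hs : 0 ≤ s) (hα : α ≠ 1) :
    (s ^ (-1 / (1 - α))) ^ (α - 1) = s := by
  have : 1 - α ≠ 0 := sub_ne_zero.mpr hα.symm
  rw [← rpow_mul hs, show -1 / (1 - α) * (α - 1) = 1 by field_simp; ring, rpow_one]

lemma rpow_neg_one_div_one_sub_rpow (hs : 0 ≤ s) :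
    (s ^ (-1 / (1 - α))) ^ α = s ^ (-α / (1 - α)) := by
  rw [← rpow_mul hs]
  ring_nf

end

lemma inverted_logistic_eval (K : ℝ) {α t : ℝ} (hα : α ≠ 0) (ht : 1 < t) :
    (t - 1) ^ (-α) + K * ((1 + ((t - 1) ^ (-α)) ^ (1 / α)) ^ α - (t - 1) ^ (-α))
      = (1 - K + K * t ^ α) / (t - 1) ^ α := by
  have hs : 0 < t - 1 := sub_pos.mpr ht
  have h_base : 1 + ((t - 1) ^ (-α)) ^ (1 / α) = t / (t - 1) := by
    rw [rpow_neg_rpow_one_div hs.le hα]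
    field_simp
    ring
  have hsα : 0 < (t - 1) ^ α := rpow_pos_of_pos hs α
  rw [h_base, div_rpow (by linarith) hs.le, rpow_neg hs.le]
  field_simp
  ring

theorem stmt8 (α γ : ℝ) (hα : α ∈ Set.Ioo (0:ℝ) 1) (hγ : γ ∈ Set.Ioo (0:ℝ) 1)
    (v₀ : ℝ) (hv₀ : v₀ = ((1 - (2:ℝ) ^ (-γ)) ^ (-1/(1-α)) - 1) ^ (-α)) :
    v₀ ∈ Set.Ioo (0:ℝ) 1 ∧
    v₀ + (2:ℝ) ^ γ * ((1 + v₀ ^ (1/α)) ^ α - v₀)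
      = (1 - (2:ℝ) ^ γ + (2:ℝ) ^ γ * (1 - (2:ℝ) ^ (-γ)) ^ (-α/(1-α)))
        / ((1 - (2:ℝ) ^ (-γ)) ^ (-1/(1-α)) - 1) ^ α ∧
    1 + (2:ℝ) ^ γ * ((1 + v₀ ^ (-1/α)) ^ (α - 1) - 1) = 0 := by
  obtain ⟨hα0, hα1⟩ := hα
  set c := 1 - (2:ℝ) ^ (-γ) with hc
  have hc0 : 0 < c := one_sub_two_rpow_neg_pos hγ.1
  have ht : 2 < c ^ (-1 / (1 - α)) := by
    refine two_lt_rpow_of_lt_half hc0 (one_sub_two_rpow_neg_lt_half hγ.2) ?_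
    rw [div_le_iff₀ (by linarith)]
    linarith
  subst hv₀
  refine ⟨⟨rpow_pos_of_pos (by linarith) _,
    rpow_lt_one_of_one_lt_of_neg (by linarith) (by linarith)⟩, ?_, ?_⟩
  · rw [inverted_logistic_eval _ hα0.ne' (by linarith), rpow_neg_one_div_one_sub_rpow hc0.le]
  · rw [rpow_neg_rpow_neg_one_div (by linarith) hα0.ne', add_sub_cancel,
      rpow_neg_one_div_one_sub_rpow_sub_one hc0.le hα1.ne, mul_sub, hc,
      two_rpow_mul_one_sub_two_rpow_neg]
    ring
end

section
/- For α ∈ (0,1) and γ ∈ (0,1), as γ → 0⁺ with α = β fixed, η_{1,3}(γ) := ((1−2^{−γ})^{−1/(1−α)} − 1)^α / (1 − 2^γ + 2^γ(1−2^{−γ})^{−α/(1−α)}) satisfies η_{1,3}(γ) = 1 − γ ln 2 + o(γ); in particular η_{1,3}(γ) → 1 as γ → 0⁺. -/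
open Topology Filter Asymptotics

/-! With `s = 1 - 2^(-γ)` and `c = 1/(1-α)`, the identity `2^γ (1 - s) = 1` collapses the
denominator to `2^γ s^(-α c) (1 - s^c)`, so that `η(γ) = 2^(-γ) (1 - s^c)^(α-1)` for `γ > 0`.
The right-hand side is a function differentiable at `0` with value `1` and derivative `-log 2`:
since `s(0) = 0` and `c > 1`, the factor `(1 - s^c)^(α-1)` is flat at `0`. -/

theorem rpow_ratio_eq_one_sub_mul_rpow {α s : ℝ} (hα : α < 1) (hs0 : 0 < s) (hs1 : s < 1) :
    ((s ^ (-1/(1-α)) - 1) ^ α) / (1 - (1 - s)⁻¹ + (1 - s)⁻¹ * s ^ (-α/(1-α)))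
      = (1 - s) * (1 - s ^ (1/(1-α))) ^ (α - 1) := by
  have h1α : (1 - α) ≠ 0 := by linarith
  set c := 1 / (1 - α)
  set b := α / (1 - α)
  have hc : 0 < c := by positivity
  have hsc : 0 < 1 - s ^ c := sub_pos.2 (Real.rpow_lt_one hs0.le hs1 hc)
  have hnum : s ^ (-1/(1-α)) - 1 = s ^ (-c) * (1 - s ^ c) := by
    rw [mul_sub, mul_one, ← Real.rpow_add hs0, neg_add_cancel, Real.rpow_zero, neg_div]
  have hnum_rpow : (s ^ (-c) * (1 - s ^ c)) ^ α = s ^ (-b) * (1 - s ^ c) ^ α := by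
    rw [Real.mul_rpow (Real.rpow_nonneg hs0.le _) hsc.le, ← Real.rpow_mul hs0.le]
    congr 2
    ring
  have hsbc : s ^ (-b) * s ^ c = s := by
    rw [← Real.rpow_add hs0, show -b + c = 1 by simp only [b, c]; field_simp; ring, Real.rpow_one]
  have hden : 1 - (1 - s)⁻¹ + (1 - s)⁻¹ * s ^ (-α/(1-α))
      = s ^ (-b) * (1 - s ^ c) / (1 - s) := by
    have : 1 - s ≠ 0 := by linarith
    rw [neg_div, mul_sub, hsbc]
    field_simp
    ring
  rw [hnum, hnum_rpow, hden, Real.rpow_sub_one hsc.ne']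
  field_simp

theorem hasDerivAt_rpow_neg_mul_one_sub_rpow_at_zero {a c : ℝ} (ha : 0 < a) (hc : 1 < c)
    (p : ℝ) :
    HasDerivAt (fun x : ℝ => a ^ (-x) * (1 - (1 - a ^ (-x)) ^ c) ^ p) (-Real.log a) 0 := by
  have hexp : HasDerivAt (fun x : ℝ => a ^ (-x)) (-Real.log a) 0 := by
    simpa using (hasDerivAt_neg (0 : ℝ)).const_rpow ha
  have hflat : HasDerivAt (fun x : ℝ => (1 - a ^ (-x)) ^ c) 0 0 := by
    convert (hexp.const_sub 1).rpow_const (Or.inr hc.le) using 1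
    simp [Real.zero_rpow (sub_pos.2 hc).ne']
  have hfactor : HasDerivAt (fun x : ℝ => (1 - (1 - a ^ (-x)) ^ c) ^ p) 0 0 := by
    convert (hflat.const_sub 1).rpow_const (p := p)
      (Or.inl (by simp [(zero_lt_one.trans hc).ne'])) using 1
    simp
  simpa [(zero_lt_one.trans hc).ne'] using hexp.fun_mul hfactor

theorem stmt9 (α : ℝ) (hα : α ∈ Set.Ioo (0:ℝ) 1)
    (η : ℝ → ℝ)
    (hη : ∀ γ : ℝ, η γ =
      ((1 - (2:ℝ) ^ (-γ)) ^ (-1/(1-α)) - 1) ^ α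
        / (1 - (2:ℝ) ^ γ + (2:ℝ) ^ γ * (1 - (2:ℝ) ^ (-γ)) ^ (-α/(1-α)))) :
    (fun γ : ℝ => η γ - (1 - γ * Real.log 2)) =o[𝓝[>] (0:ℝ)] (fun γ : ℝ => γ) ∧
    Tendsto η (𝓝[>] (0:ℝ)) (𝓝 1) := by
  obtain ⟨hα0, hα1⟩ := hα
  set φ : ℝ → ℝ := fun γ => 2 ^ (-γ) * (1 - (1 - 2 ^ (-γ)) ^ (1/(1-α))) ^ (α - 1)
  have hφ : HasDerivAt φ (-Real.log 2) 0 :=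
    hasDerivAt_rpow_neg_mul_one_sub_rpow_at_zero two_pos
      (one_lt_one_div (by linarith) (by linarith)) _
  have hφ0 : φ 0 = 1 := by simp [φ, Real.zero_rpow, (sub_pos.2 hα1).ne']
  have hηφ : η =ᶠ[𝓝[>] 0] φ := by
    filter_upwards [self_mem_nhdsWithin] with γ (hγ : 0 < γ)
    have h2γ : (1 - (1 - (2:ℝ) ^ (-γ)))⁻¹ = 2 ^ γ := by
      rw [sub_sub_cancel, Real.rpow_neg zero_le_two, inv_inv]
    have hs0 : 0 < 1 - (2:ℝ) ^ (-γ) :=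
      sub_pos.2 (Real.rpow_lt_one_of_one_lt_of_neg one_lt_two (neg_neg_of_pos hγ))
    have hs1 : 1 - (2:ℝ) ^ (-γ) < 1 := sub_lt_self _ (Real.rpow_pos_of_pos two_pos _)
    rw [hη, ← h2γ, rpow_ratio_eq_one_sub_mul_rpow hα1 hs0 hs1, sub_sub_cancel]
  constructor
  · have := hφ.isLittleO.mono (nhdsWithin_le_nhds (s := Set.Ioi 0))
    simp only [hφ0, sub_zero, smul_eq_mul] at this
    refine this.congr' ?_ EventuallyEq.rfl
    filter_upwards [hηφ] with γ hγ
    rw [hγ]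
    ring
  · have := (hφ0 ▸ hφ.continuousAt.tendsto).mono_left (nhdsWithin_le_nhds (s := Set.Ioi 0))
    exact this.congr' hηφ.symm
end

section
/- For β, γ ∈ (0,1), define h(v) = v + (1/γ)((1+v^{1/β})^β − v) for v ≥ 1. Then h'(v) = 1 + (1/γ)((1+v^{−1/β})^{β−1} − 1), and: (a) if γ ≥ 1 − 2^{β−1} then h is nondecreasing on [1,∞) with minimum h(1) = 1 + (2^β−1)/γ; (b) if γ < 1 − 2^{β−1} then h attains its minimum on [1,∞) at v₀ = ((1−γ)^{−1/(1−β)} − 1)^{−β} > 1, with minimum value ((1−γ)/γ)((1−γ)^{−1/(1−β)} − 1)^{1−β}. -/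
/-!
Write `h' v = 1 + (s v - 1) / γ` with `s v = (1 + v ^ (-1/β)) ^ (β - 1)`. Since `β < 1`,
`s` is nondecreasing on `(0, ∞)` and `s 1 = 2 ^ (β - 1)`. So if `1 - γ ≤ 2 ^ (β - 1)` then
`h' ≥ 0` on `[1, ∞)`; otherwise `h'` is nonpositive up to the point `v₀ > 1` where
`s v₀ = 1 - γ`, i.e. `v₀ ^ (-1/β) = A := (1 - γ) ^ (-1/(1-β)) - 1`, and nonnegative after it.
At `v₀` the identity `(1 + A) ^ β = (1 - γ) (1 + A)` turns `h v₀` into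
`(1 - γ) / γ * A ^ (1 - β)`.
-/

open Real Set

noncomputable def vineH (β γ v : ℝ) : ℝ := v + (1 / γ) * ((1 + v ^ (1 / β)) ^ β - v)

noncomputable def vineSlope (β v : ℝ) : ℝ := (1 + v ^ (-1 / β)) ^ (β - 1)

/-- `vineShift β γ ^ (-β)` is the critical point of `vineH β γ`. -/
noncomputable def vineShift (β γ : ℝ) : ℝ := (1 - γ) ^ (-1 / (1 - β)) - 1

theorem le_of_antitoneOn_Icc_of_monotoneOn_Ici {α δ : Type*} [LinearOrder α] [Preorder δ]
    {f : α → δ} {a b : α} (hab : a ≤ b) (hanti : AntitoneOn f (Icc a b))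
    (hmono : MonotoneOn f (Ici b)) : ∀ v ∈ Ici a, f b ≤ f v := by
  intro v hv
  rcases le_total v b with hvb | hbv
  · exact hanti ⟨hv, hvb⟩ ⟨hab, le_rfl⟩ hvb
  · exact hmono self_mem_Ici hbv hbv

section

variable {β γ : ℝ}

theorem hasDerivAt_one_add_rpow_inv_rpow (hβ : β ≠ 0) {v : ℝ} (hv : 0 < v) :
    HasDerivAt (fun x => (1 + x ^ (1 / β)) ^ β) (vineSlope β v) v := by
  have hchain := ((hasDerivAt_rpow_const (p := 1 / β) (Or.inl hv.ne')).const_add 1).rpow_const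
    (p := β) (Or.inl (by positivity))
  convert hchain using 1
  have hsplit : 1 + v ^ (-1 / β) = (1 + v ^ (1 / β)) * v ^ (-1 / β) := by
    rw [add_mul, one_mul, ← rpow_add hv, neg_div, add_neg_cancel, rpow_zero, add_comm]
  rw [vineSlope, hsplit, mul_rpow (by positivity) (by positivity), ← rpow_mul hv.le]
  field_simp
  ring_nf

theorem hasDerivAt_vineH (hβ : β ≠ 0) {v : ℝ} (hv : 0 < v) :
    HasDerivAt (vineH β γ) (1 + (1 / γ) * (vineSlope β v - 1)) v :=
  (hasDerivAt_id v).add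
    (((hasDerivAt_one_add_rpow_inv_rpow hβ hv).sub (hasDerivAt_id v)).const_mul (1 / γ))

theorem monotoneOn_vineSlope (hβ0 : 0 ≤ β) (hβ1 : β ≤ 1) :
    MonotoneOn (vineSlope β) (Ioi 0) := by
  intro a ha b hb hab
  have hexp : -1 / β ≤ 0 := div_nonpos_of_nonpos_of_nonneg (by norm_num) hβ0
  have hb : 0 < 1 + b ^ (-1 / β) := by have := hb.out; positivity
  exact rpow_le_rpow_of_nonpos hb (add_le_add_right (rpow_le_rpow_of_nonpos ha hab hexp) 1)
    (by linarith)

theorem one_add_one_div_mul_sub_one_eq_div (hγ : γ ≠ 0) (s : ℝ) :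
    1 + (1 / γ) * (s - 1) = (s - (1 - γ)) / γ := by
  field_simp
  ring

theorem monotoneOn_vineH (hβ : β ≠ 0) (hγ : 0 < γ) {D : Set ℝ} (hD : Convex ℝ D)
    (hDpos : D ⊆ Ioi 0) (hslope : ∀ v ∈ interior D, 1 - γ ≤ vineSlope β v) :
    MonotoneOn (vineH β γ) D :=
  monotoneOn_of_hasDerivWithinAt_nonneg hD
    (fun v hv => (hasDerivAt_vineH hβ (hDpos hv)).continuousAt.continuousWithinAt)
    (fun v hv => (hasDerivAt_vineH hβ (hDpos (interior_subset hv))).hasDerivWithinAt)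
    (fun v hv => by
      rw [one_add_one_div_mul_sub_one_eq_div hγ.ne']
      exact div_nonneg (sub_nonneg.mpr (hslope v hv)) hγ.le)

theorem antitoneOn_vineH (hβ : β ≠ 0) (hγ : 0 < γ) {D : Set ℝ} (hD : Convex ℝ D)
    (hDpos : D ⊆ Ioi 0) (hslope : ∀ v ∈ interior D, vineSlope β v ≤ 1 - γ) :
    AntitoneOn (vineH β γ) D :=
  antitoneOn_of_hasDerivWithinAt_nonpos hD
    (fun v hv => (hasDerivAt_vineH hβ (hDpos hv)).continuousAt.continuousWithinAt)
    (fun v hv => (hasDerivAt_vineH hβ (hDpos (interior_subset hv))).hasDerivWithinAt)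
    (fun v hv => by
      rw [one_add_one_div_mul_sub_one_eq_div hγ.ne']
      exact div_nonpos_of_nonpos_of_nonneg (sub_nonpos.mpr (hslope v hv)) hγ.le)

theorem vineSlope_one : vineSlope β 1 = 2 ^ (β - 1) := by
  norm_num [vineSlope]

theorem vineH_one : vineH β γ 1 = 1 + (2 ^ β - 1) / γ := by
  norm_num [vineH]
  ring

theorem monotoneOn_vineH_Ici_one (hβ0 : 0 < β) (hβ1 : β ≤ 1) (hγ : 0 < γ)
    (hcase : 1 - 2 ^ (β - 1) ≤ γ) : MonotoneOn (vineH β γ) (Ici 1) := by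
  refine monotoneOn_vineH hβ0.ne' hγ (convex_Ici 1) (Ici_subset_Ioi.mpr one_pos) ?_
  intro v hv
  rw [interior_Ici] at hv
  calc 1 - γ ≤ vineSlope β 1 := by rw [vineSlope_one]; linarith
    _ ≤ vineSlope β v :=
      monotoneOn_vineSlope hβ0.le hβ1 (mem_Ioi.mpr one_pos) (mem_Ioi.mpr (one_pos.trans hv))
        hv.out.le

theorem one_add_vineShift_rpow (hβ : β ≠ 1) (hγ : γ ≤ 1) :
    (1 + vineShift β γ) ^ (β - 1) = 1 - γ := by
  have hexp : -1 / (1 - β) * (β - 1) = 1 := by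
    field_simp [sub_ne_zero.mpr hβ.symm]
    ring
  rw [vineShift, add_sub_cancel, ← rpow_mul (by linarith), hexp, rpow_one]

theorem vineShift_pos (hβ : β < 1) (hγ0 : 0 < γ) (hγ1 : γ < 1) : 0 < vineShift β γ := by
  have := one_lt_rpow_of_pos_of_lt_one_of_neg (x := 1 - γ) (z := -1 / (1 - β)) (by linarith)
    (by linarith) (div_neg_of_neg_of_pos (by norm_num) (by linarith))
  rw [vineShift]
  linarith

theorem vineShift_lt_one (hβ : β < 1) (hγ : γ < 1) (hcase : γ < 1 - 2 ^ (β - 1)) :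
    vineShift β γ < 1 := by
  by_contra! h
  have := rpow_le_rpow_of_nonpos two_pos (show 2 ≤ 1 + vineShift β γ by linarith)
    (by linarith : β - 1 ≤ 0)
  rw [one_add_vineShift_rpow hβ.ne hγ.le] at this
  linarith

theorem one_lt_vineShift_rpow_neg (hβ0 : 0 < β) (hβ1 : β < 1) (hγ0 : 0 < γ) (hγ1 : γ < 1)
    (hcase : γ < 1 - 2 ^ (β - 1)) : 1 < vineShift β γ ^ (-β) :=
  one_lt_rpow_of_pos_of_lt_one_of_neg (vineShift_pos hβ1 hγ0 hγ1)
    (vineShift_lt_one hβ1 hγ1 hcase) (neg_lt_zero.mpr hβ0)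

theorem vineSlope_rpow_neg (hβ : β ≠ 0) {A : ℝ} (hA : 0 ≤ A) :
    vineSlope β (A ^ (-β)) = (1 + A) ^ (β - 1) := by
  rw [vineSlope, ← rpow_mul hA, show -β * (-1 / β) = 1 by field_simp, rpow_one]

theorem vineH_rpow_neg (hβ : β ≠ 0) {A : ℝ} (hA : 0 < A) :
    vineH β γ (A ^ (-β)) = A ^ (-β) * (1 + (1 / γ) * ((1 + A) ^ β - 1)) := by
  have hinv : (A ^ (-β)) ^ (1 / β) = A⁻¹ := by
    rw [← rpow_mul hA.le, show -β * (1 / β) = -1 by field_simp, rpow_neg_one]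
  have hpow : (1 + A⁻¹) ^ β = (1 + A) ^ β * A ^ (-β) := by
    rw [show 1 + A⁻¹ = (1 + A) * A⁻¹ by field_simp; ring,
      mul_rpow (by positivity) (by positivity), inv_rpow hA.le, ← rpow_neg hA.le]
  rw [vineH, hinv, hpow]
  ring

theorem vineH_vineShift_rpow_neg_le (hβ0 : 0 < β) (hβ1 : β < 1) (hγ0 : 0 < γ) (hγ1 : γ < 1)
    (hcase : γ < 1 - 2 ^ (β - 1)) :
    ∀ v ∈ Ici 1, vineH β γ (vineShift β γ ^ (-β)) ≤ vineH β γ v := by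
  set v₀ := vineShift β γ ^ (-β)
  have hA := vineShift_pos hβ1 hγ0 hγ1
  have hslope₀ : vineSlope β v₀ = 1 - γ := by
    rw [vineSlope_rpow_neg hβ0.ne' hA.le, one_add_vineShift_rpow hβ1.ne hγ1.le]
  have hv₀ : 1 < v₀ := one_lt_vineShift_rpow_neg hβ0 hβ1 hγ0 hγ1 hcase
  have hslope := monotoneOn_vineSlope hβ0.le hβ1.le
  have hanti : AntitoneOn (vineH β γ) (Icc 1 v₀) := by
    refine antitoneOn_vineH hβ0.ne' hγ0 (convex_Icc 1 v₀)
      (fun v hv => mem_Ioi.mpr (one_pos.trans_le hv.1)) fun v hv => ?_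
    rw [interior_Icc] at hv
    exact hslope₀ ▸ hslope (mem_Ioi.mpr (one_pos.trans hv.1))
      (mem_Ioi.mpr (one_pos.trans hv₀)) hv.2.le
  have hmono : MonotoneOn (vineH β γ) (Ici v₀) := by
    refine monotoneOn_vineH hβ0.ne' hγ0 (convex_Ici v₀)
      (Ici_subset_Ioi.mpr (one_pos.trans hv₀)) fun v hv => ?_
    rw [interior_Ici] at hv
    exact hslope₀ ▸ hslope (mem_Ioi.mpr (one_pos.trans hv₀))
      (mem_Ioi.mpr (one_pos.trans (hv₀.trans hv))) hv.out.le
  exact le_of_antitoneOn_Icc_of_monotoneOn_Ici hv₀.le hanti hmono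

theorem vineH_vineShift_rpow_neg (hβ0 : β ≠ 0) (hβ1 : β < 1) (hγ0 : 0 < γ) (hγ1 : γ < 1) :
    vineH β γ (vineShift β γ ^ (-β)) = ((1 - γ) / γ) * vineShift β γ ^ (1 - β) := by
  have hA := vineShift_pos hβ1 hγ0 hγ1
  have hpow : (1 + vineShift β γ) ^ β = (1 - γ) * (1 + vineShift β γ) := by
    rw [← one_add_vineShift_rpow hβ1.ne hγ1.le, ← rpow_add_one (by positivity),
      sub_add_cancel]
  rw [vineH_rpow_neg hβ0 hA, hpow, show 1 - β = -β + 1 by ring, rpow_add_one hA.ne']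
  field_simp
  ring

end

theorem stmt10 (β γ : ℝ) (hβ : β ∈ Set.Ioo (0:ℝ) 1) (hγ : γ ∈ Set.Ioo (0:ℝ) 1)
    (h : ℝ → ℝ)
    (hh : ∀ v : ℝ, h v = v + (1/γ) * ((1 + v ^ (1/β)) ^ β - v)) :
    (∀ v : ℝ, 1 ≤ v → deriv h v = 1 + (1/γ) * ((1 + v ^ (-1/β)) ^ (β - 1) - 1)) ∧
    (1 - (2:ℝ) ^ (β - 1) ≤ γ →
      MonotoneOn h (Set.Ici 1) ∧
      h 1 = 1 + ((2:ℝ) ^ β - 1) / γ ∧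
      ∀ v ∈ Set.Ici (1:ℝ), h 1 ≤ h v) ∧
    (γ < 1 - (2:ℝ) ^ (β - 1) →
      1 < ((1-γ) ^ (-1/(1-β)) - 1) ^ (-β) ∧
      (∀ v ∈ Set.Ici (1:ℝ), h (((1-γ) ^ (-1/(1-β)) - 1) ^ (-β)) ≤ h v) ∧
      h (((1-γ) ^ (-1/(1-β)) - 1) ^ (-β))
        = ((1-γ)/γ) * ((1-γ) ^ (-1/(1-β)) - 1) ^ (1-β)) := by
  obtain ⟨hβ0, hβ1⟩ := hβ
  obtain ⟨hγ0, hγ1⟩ := hγ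
  obtain rfl : h = vineH β γ := funext hh
  refine ⟨fun v hv => (hasDerivAt_vineH hβ0.ne' (one_pos.trans_le hv)).deriv, fun hcase => ?_,
    fun hcase => ⟨one_lt_vineShift_rpow_neg hβ0 hβ1 hγ0 hγ1 hcase,
      vineH_vineShift_rpow_neg_le hβ0 hβ1 hγ0 hγ1 hcase,
      vineH_vineShift_rpow_neg hβ0.ne' hβ1 hγ0 hγ1⟩⟩
  have hmono := monotoneOn_vineH_Ici_one hβ0 hβ1.le hγ0 hcase
  exact ⟨hmono, vineH_one, fun v hv => hmono self_mem_Ici hv hv⟩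
end

section
/- For β, γ ∈ (0,1): if γ ≥ 1 − 2^{β−1}, then 1 + (2^β−1)/γ ≥ 2^β; and if γ < 1 − 2^{β−1}, then ((1−γ)/γ)((1−γ)^{−1/(1−β)} − 1)^{1−β} > 2^β. -/
/-!
The first inequality holds because `2 ^ β ≥ 1` and `γ ≤ 1`. For the second, put `p = 1 - β` and
`s = (1 - γ) ^ (-1 / p)`, so that `1 - γ = s ^ (-p)`; the hypothesis on `γ` says exactly `1 < s < 2`,
and the inequality becomes `2 ^ (1 - p) * (s ^ p - 1) < (s - 1) ^ p`. With `x = s - 1 ∈ (0, 1)`,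
Bernoulli's inequality gives `(1 + x) ^ p - 1 ≤ p * x` and `2 ^ (1 - p) ≤ 2 - p`, while
`p * (2 - p) < 1` and `x ≤ x ^ p`.
-/

open Real

lemma two_rpow_le_one_add {y : ℝ} (hy0 : 0 ≤ y) (hy1 : y ≤ 1) : (2 : ℝ) ^ y ≤ 1 + y := by
  simpa [one_add_one_eq_two] using
    rpow_one_add_le_one_add_mul_self (s := 1) (by norm_num) hy0 hy1

lemma two_rpow_one_sub_mul_one_add_rpow_sub_one_lt_rpow {p x : ℝ} (hp0 : 0 ≤ p) (hp1 : p < 1)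
    (hx0 : 0 < x) (hx1 : x ≤ 1) : (2 : ℝ) ^ (1 - p) * ((1 + x) ^ p - 1) < x ^ p := by
  have hbernoulli : (1 + x) ^ p ≤ 1 + p * x :=
    rpow_one_add_le_one_add_mul_self (by linarith) hp0 hp1.le
  have htwo : (2 : ℝ) ^ (1 - p) ≤ 2 - p := by
    linarith [two_rpow_le_one_add (y := 1 - p) (by linarith) (by linarith)]
  have hx_le : x ≤ x ^ p := by
    simpa using rpow_le_rpow_of_exponent_ge hx0 hx1 hp1.le
  calc (2 : ℝ) ^ (1 - p) * ((1 + x) ^ p - 1)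
      ≤ (2 - p) * (p * x) := by
        refine mul_le_mul htwo (by linarith) ?_ (by linarith)
        linarith [one_le_rpow (by linarith : (1 : ℝ) ≤ 1 + x) hp0]
    _ < x := by nlinarith [mul_pos (sq_pos_of_pos (by linarith : 0 < 1 - p)) hx0]
    _ ≤ x ^ p := hx_le

lemma two_rpow_lt_of_lt_one_sub_two_rpow {β γ : ℝ} (hβ0 : 0 < β) (hβ1 : β < 1) (hγ0 : 0 < γ)
    (hγ : γ < 1 - (2 : ℝ) ^ (β - 1)) :
    (2 : ℝ) ^ β < ((1 - γ) / γ) * ((1 - γ) ^ (-1 / (1 - β)) - 1) ^ (1 - β) := by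
  set p := 1 - β
  have hp0 : 0 < p := by linarith
  have hexp : -1 / p < 0 := div_neg_of_neg_of_pos (by norm_num) hp0
  have ht0 : 0 < 1 - γ := by linarith [rpow_pos_of_pos (two_pos : (0 : ℝ) < 2) (β - 1)]
  set s := (1 - γ) ^ (-1 / p) with hs
  have hs0 : 0 < s := rpow_pos_of_pos ht0 _
  have hs_pow : s ^ (-p) = 1 - γ := by
    rw [hs, ← rpow_mul ht0.le, show -1 / p * -p = 1 by field_simp, rpow_one]
  have hs1 : 1 < s := one_lt_rpow_of_pos_of_lt_one_of_neg ht0 (by linarith) hexp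
  have hs2 : s < 2 := by
    have h2 : ((2 : ℝ) ^ (-p)) ^ (-1 / p) = 2 := by
      rw [← rpow_mul zero_le_two, show -p * (-1 / p) = 1 by field_simp, rpow_one]
    have hlt : (2 : ℝ) ^ (-p) < 1 - γ := by
      rw [show -p = β - 1 by ring]; linarith
    simpa [h2] using rpow_lt_rpow_of_neg (by positivity) hlt hexp
  have hsp1 : 1 < s ^ p := one_lt_rpow hs1 hp0
  have hratio : (1 - γ) / γ = 1 / (s ^ p - 1) := by
    rw [show γ = 1 - (1 - γ) by ring, ← hs_pow, rpow_neg hs0.le]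
    field_simp
    ring
  rw [hratio, show β = 1 - p by ring, div_mul_eq_mul_div, one_mul, lt_div_iff₀ (by linarith)]
  simpa using two_rpow_one_sub_mul_one_add_rpow_sub_one_lt_rpow hp0.le (by linarith)
    (sub_pos.2 hs1) (by linarith)

theorem stmt11 (β γ : ℝ) (hβ : β ∈ Set.Ioo (0:ℝ) 1) (hγ : γ ∈ Set.Ioo (0:ℝ) 1) :
    (1 - (2:ℝ) ^ (β - 1) ≤ γ → (2:ℝ) ^ β ≤ 1 + ((2:ℝ) ^ β - 1) / γ) ∧
    (γ < 1 - (2:ℝ) ^ (β - 1) →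
      (2:ℝ) ^ β < ((1-γ)/γ) * ((1-γ) ^ (-1/(1-β)) - 1) ^ (1-β)) := by
  obtain ⟨hβ0, hβ1⟩ := hβ
  obtain ⟨hγ0, hγ1⟩ := hγ
  refine ⟨fun _ => ?_, two_rpow_lt_of_lt_one_sub_two_rpow hβ0 hβ1 hγ0⟩
  have h2β : 1 ≤ (2 : ℝ) ^ β := one_le_rpow one_le_two hβ0.le
  have hdiv : (2 : ℝ) ^ β - 1 ≤ ((2 : ℝ) ^ β - 1) / γ := by
    rw [le_div_iff₀ hγ0]; nlinarith
  linarith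
end
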